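/- Let g be the Heisenberg Lie algebra with basis X,Y,Z, [X,Y]=Z, with the Lorentzian inner product whose matrix in (X,Y,Z) is [[1,0,0],[0,1,1/2],[0,1/2,0]]. Then the associated curvature tensor K(u,v)=L_{[u,v]}-[L_u,L_v] vanishes identically, i.e. the metric is flat. -/

import Mathlib

noncomputable section

/-- The Heisenberg bracket: `[X,Y] = Z` in the standard basis `(X,Y,Z)`. -/
def br (u v : Fin 3 → ℝ) : Fin 3 → ℝ :=
  ![0, 0, u 0 * v 1 - u 1 * v 0]

/-- The Lorentzian metric with matrix `[[1,0,0],[0,1,1/2],[0,1/2,0]]`. -/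
def G : Matrix (Fin 3) (Fin 3) ℝ := !![1, 0, 0; 0, 1, 1/2; 0, 1/2, 0]

/-- The corresponding inner product. -/
def ip (u v : Fin 3 → ℝ) : ℝ := dotProduct u (G.mulVec v)

/-- With the Levi-Civita product `L` given by Koszul's formula, the curvature
tensor `K(u,v) = L_{[u,v]} - [L_u, L_v]` vanishes identically: the metric is
flat. -/
theorem nil_metric_flat
    (L : (Fin 3 → ℝ) → (Fin 3 → ℝ) → (Fin 3 → ℝ))
    (hL : ∀ u v w, 2 * ip (L u v) w =
      ip (br u v) w + ip (br w u) v + ip (br w v) u) :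
    ∀ u v w, L (br u v) w - L u (L v w) + L v (L u w) = 0 := by
  have key : ∀ u v, L u v = ![u 1 * v 1 / 2, 0, -(u 1 * v 0)] := by
    intro u v
    have h0 := hL u v ![1, 0, 0]
    have h1 := hL u v ![0, 1, 0]
    have h2 := hL u v ![0, 0, 1]
    simp [ip, G, br, dotProduct, Matrix.mulVec, Fin.sum_univ_three,
      Matrix.vecHead, Matrix.vecTail] at h0 h1 h2
    funext i
    fin_cases i <;> simp <;> linarith
  intro u v w
  funext i
  simp only [key, br, Pi.sub_apply, Pi.add_apply, Pi.zero_apply]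
  fin_cases i <;> simp [Matrix.vecHead, Matrix.vecTail] <;> ring
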